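/- Let f : ℝ × (0, ∞) → ℝ be continuous and satisfy: (a) for every 0 < a < b there is L > 0 with |f(x, r₁) − f(x, r₂)| ≤ L|r₁ − r₂| for all x ∈ ℝ and r₁, r₂ ∈ [a, b]; (b) there exist δ > 0 and c > 0 with f(x, r) ≤ −c/(2r) for all x ∈ ℝ and 0 < r < δ; (c) there exists R₀ > δ with f(x, r) ≥ 1/2 for all x ∈ ℝ and r ≥ R₀; (d) there exists K > 0 with |f(x, r)| ≤ K for all x ∈ ℝ and r ≥ δ. For t ∈ ℝ let 𝓕⁻(t) be the set of differentiable r : [t, T) → (0, ∞) (some T ∈ (t, ∞)) with r′(x) = f(x, r(x)) on [t, T) and r(x) → 0 as x → T⁻, and let 𝓕⁺(t) be the set of differentiable r : [t, ∞) → (0, ∞) with r′ = f(·, r) and r(x) → +∞ as x → +∞. Then there exist constants 0 < m ≤ M and a differentiable R₊ : ℝ → ℝ with m ≤ R₊(x) ≤ M and R₊′(x) = f(x, R₊(x)) for all x ∈ ℝ, such that for every t ∈ ℝ: R₊(t) = sup { r(t) : r ∈ 𝓕⁻(t) }, and R₊(t) ≤ r(t) for every r ∈ 𝓕⁺(t).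 -/

import Mathlib

open Filter

/-- The family `𝓕⁺(t)` of positive solutions of `r' = f(x, r)` on `[t, ∞)`
escaping to `+∞`. -/
def escapingSolutions (f : ℝ → ℝ → ℝ) (t : ℝ) : Set (ℝ → ℝ) :=
  {r | (∀ x ∈ Set.Ici t, 0 < r x) ∧
       (∀ x ∈ Set.Ici t, HasDerivWithinAt r (f x (r x)) (Set.Ici t) x) ∧
       Tendsto r atTop atTop}

/-- The set of values `r(t)` of solutions in the family `𝓕⁻(t)`: positive
solutions of `r' = f(x, r)` on some `[t, T)` which end at `r = 0` as `x → T⁻`. -/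
def vanishingValues (f : ℝ → ℝ → ℝ) (t : ℝ) : Set ℝ :=
  {y | ∃ r : ℝ → ℝ, ∃ T : ℝ, t < T ∧
        (∀ x ∈ Set.Ico t T, 0 < r x) ∧
        (∀ x ∈ Set.Ico t T, HasDerivWithinAt r (f x (r x)) (Set.Ico t T) x) ∧
        Tendsto r (nhdsWithin T (Set.Iio T)) (nhds 0) ∧
        r t = y}

/-!
Let `V(t)` be the set of values at time `t` of the solutions in `𝓕⁻(t)`, and `R(t) = sup V(t)`.
Below `δ` the field is negative, so `(0, δ) ⊆ V(t)` (the solutions of the field truncated at levels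
`a ↓ 0` piece together a solution reaching `0`); above `R₀` it is positive, so solutions ending at
`0` stay below `R₀`. Hence `δ ≤ R ≤ R₀`.

Trajectories in a band `[p, q]` with `p > 0` cannot cross, so a solution ending at `0` which starts
above a positive trajectory on `[s, u]` is still alive at `u`, and above it. Let `g` be the field
truncated to `[δ/2, R₀ + 1]` and `ψ` the `g`-trajectory with `ψ(s) = R(s)`. A value `y ≥ δ/2` of
`V(u)` flows back under `g` to a value of `V(s)`, so `y ≤ ψ(u)`. A value `R(u) < y < ψ(u)` would flow
back below `R(s)`, hence below some value of `V(s)`, whose solution then carries a value `≥ y` into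
`V(u)`. So `ψ = R` on `[s, ∞)`, and `R` solves the equation. The same comparison puts `R(t)` below
`r(t)` for every positive solution `r` on `[t, ∞)`.
-/

open Set Topology NNReal

namespace IsIntegralCurveOn

section

variable {E : Type*} [NormedAddCommGroup E] [NormedSpace ℝ E] {v : ℝ → E → E} {γ : ℝ → E}

theorem congr {α : ℝ → E} {s : Set ℝ} (hα : IsIntegralCurveOn α v s) (h : EqOn γ α s) :
    IsIntegralCurveOn γ v s := fun t ht => by
  rw [h ht]
  exact (hα t ht).congr h (h ht)

theorem union {s₁ s₂ : Set ℝ} (h₁ : IsIntegralCurveOn γ v s₁) (h₂ : IsIntegralCurveOn γ v s₂)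
    (hs₁ : closure s₁ ∩ s₂ ⊆ s₁) (hs₂ : closure s₂ ∩ s₁ ⊆ s₂) :
    IsIntegralCurveOn γ v (s₁ ∪ s₂) := by
  have hderiv : ∀ {s t : Set ℝ}, IsIntegralCurveOn γ v s → closure s ∩ t ⊆ s →
      ∀ x ∈ t, HasDerivWithinAt γ (v x (γ x)) s x := by
    intro s t hs hst x hx
    by_cases hxs : x ∈ s
    · exact hs x hxs
    · exact HasFDerivWithinAt.of_notMem_closure fun hcl => hxs (hst ⟨hcl, hx⟩)
  rintro x (hx | hx)
  · exact (h₁ x hx).union (hderiv h₂ hs₂ x hx)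
  · exact (hderiv h₁ hs₁ x hx).union (h₂ x hx)

theorem hasDerivWithinAt_Ici {a b t : ℝ} (hγ : IsIntegralCurveOn γ v (Icc a b))
    (ht : t ∈ Ico a b) : HasDerivWithinAt γ (v t (γ t)) (Ici t) t :=
  (hγ t (Ico_subset_Icc_self ht)).mono_of_mem_nhdsWithin (Icc_mem_nhdsGE_of_mem ht)

theorem eqOn_Icc {K : ℝ≥0} (hv : ∀ t, LipschitzWith K (v t)) {β : ℝ → E} {a b : ℝ}
    (hγ : IsIntegralCurveOn γ v (Icc a b)) (hβ : IsIntegralCurveOn β v (Icc a b))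
    (ha : γ a = β a) : EqOn γ β (Icc a b) :=
  ODE_solution_unique hv hγ.continuousOn (fun _ ht => hγ.hasDerivWithinAt_Ici ht)
    hβ.continuousOn (fun _ ht => hβ.hasDerivWithinAt_Ici ht) ha

end

variable {v : ℝ → ℝ → ℝ} {γ : ℝ → ℝ} {a b : ℝ}

/-- At a crossing time the two trajectories would coincide from then on. -/
theorem le_of_le {s : Set ℝ} {K : ℝ≥0} (hv : ∀ t, LipschitzOnWith K (v t) s) {β : ℝ → ℝ}
    (hγ : IsIntegralCurveOn γ v (Icc a b)) (hβ : IsIntegralCurveOn β v (Icc a b))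
    (hγs : ∀ t ∈ Icc a b, γ t ∈ s) (hβs : ∀ t ∈ Icc a b, β t ∈ s) (ha : γ a ≤ β a) :
    ∀ t ∈ Icc a b, γ t ≤ β t := by
  intro t ht
  by_contra! hlt
  have hsub : Icc a t ⊆ Icc a b := Icc_subset_Icc_right ht.2
  obtain ⟨σ, hσ, hσeq⟩ : ∃ σ ∈ Icc a t, β σ - γ σ = 0 :=
    intermediate_value_Icc' ht.1 ((hβ.continuousOn.sub hγ.continuousOn).mono hsub)
      ⟨by simp only [Pi.sub_apply]; linarith, by simp only [Pi.sub_apply]; linarith⟩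
  have hsub' : Icc σ t ⊆ Icc a b := (Icc_subset_Icc_left hσ.1).trans hsub
  have heq := ODE_solution_unique_of_mem_Icc_right (s := fun _ => s) (fun t _ => hv t)
    (hγ.mono hsub').continuousOn (fun _ ht' => (hγ.mono hsub').hasDerivWithinAt_Ici ht')
    (fun t' ht' => hγs t' (hsub' (Ico_subset_Icc_self ht')))
    (hβ.mono hsub').continuousOn (fun _ ht' => (hβ.mono hsub').hasDerivWithinAt_Ici ht')
    (fun t' ht' => hβs t' (hsub' (Ico_subset_Icc_self ht'))) (by linarith) ⟨hσ.2, le_rfl⟩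
  exact hlt.ne' heq

theorem le_const_of_left {d : ℝ} (hγ : IsIntegralCurveOn γ v (Icc a b))
    (hv : ∀ t ∈ Ico a b, v t d < 0) (ha : γ a ≤ d) : ∀ t ∈ Icc a b, γ t ≤ d :=
  image_le_of_deriv_right_lt_deriv_boundary hγ.continuousOn
    (fun _ ht => hγ.hasDerivWithinAt_Ici ht) ha (fun _ => hasDerivAt_const _ d)
    fun t ht h => by rw [h]; exact hv t ht

theorem const_le_of_left {d : ℝ} (hγ : IsIntegralCurveOn γ v (Icc a b))
    (hv : ∀ t ∈ Ico a b, 0 < v t d) (ha : d ≤ γ a) : ∀ t ∈ Icc a b, d ≤ γ t :=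
  image_le_of_deriv_right_lt_deriv_boundary' continuousOn_const
    (fun _ _ => hasDerivWithinAt_const _ _ d) ha hγ.continuousOn
    (fun _ ht => hγ.hasDerivWithinAt_Ici ht) fun t ht h => by rw [← h]; exact hv t ht

theorem const_le_of_right {m : ℝ} (hγ : IsIntegralCurveOn γ v (Icc a b))
    (hv : ∀ t, ∀ r < m, v t r < 0) (hb : m ≤ γ b) : ∀ t ∈ Icc a b, m ≤ γ t := by
  intro t ht
  by_contra! hlt
  have := (hγ.mono (Icc_subset_Icc_left ht.1)).le_const_of_left (fun t' _ => hv t' _ hlt) le_rfl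
    b ⟨ht.2, le_rfl⟩
  linarith

theorem le_const_of_right {M : ℝ} (hγ : IsIntegralCurveOn γ v (Icc a b))
    (hv : ∀ t, ∀ r > M, 0 < v t r) (hb : γ b ≤ M) : ∀ t ∈ Icc a b, γ t ≤ M := by
  intro t ht
  by_contra! hlt
  have := (hγ.mono (Icc_subset_Icc_left ht.1)).const_le_of_left (fun t' _ => hv t' _ hlt) le_rfl
    b ⟨ht.2, le_rfl⟩
  linarith

theorem le_sub_mul {k : ℝ} (hγ : IsIntegralCurveOn γ v (Icc a b))
    (hv : ∀ t ∈ Ico a b, v t (γ t) ≤ -k) : ∀ t ∈ Icc a b, γ t ≤ γ a - k * (t - a) :=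
  image_le_of_deriv_right_le_deriv_boundary hγ.continuousOn
    (fun _ ht => hγ.hasDerivWithinAt_Ici ht) (by simp) (by fun_prop)
    (fun t _ => (((hasDerivAt_id t).sub_const a).const_mul k).const_sub _ |>.hasDerivWithinAt)
    fun t ht => by simpa using hv t ht

theorem antitoneOn (hγ : IsIntegralCurveOn γ v (Icc a b)) (hv : ∀ t ∈ Ico a b, v t (γ t) ≤ 0) :
    AntitoneOn γ (Icc a b) := by
  intro t ht t' ht' htt'
  have := (hγ.mono (Icc_subset_Icc ht.1 ht'.2)).le_sub_mul (k := 0)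
    (fun x hx => by simpa using hv x ⟨ht.1.trans hx.1, hx.2.trans_le ht'.2⟩) t' ⟨htt', le_rfl⟩
  simpa using this

end IsIntegralCurveOn

theorem exists_isIntegralCurveOn_Icc {E : Type*} [NormedAddCommGroup E] [NormedSpace ℝ E]
    [CompleteSpace E] {v : ℝ → E → E} {K : ℝ≥0} {C : ℝ} (hlip : ∀ t, LipschitzWith K (v t))
    (hcont : ∀ x, Continuous (v · x)) (hbdd : ∀ t x, ‖v t x‖ ≤ C) {a b t₀ : ℝ}
    (ht₀ : t₀ ∈ Icc a b) (x₀ : E) : ∃ γ : ℝ → E, γ t₀ = x₀ ∧ IsIntegralCurveOn γ v (Icc a b) := by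
  have hC : 0 ≤ C := (norm_nonneg _).trans (hbdd 0 x₀)
  have hpl : IsPicardLindelof v (tmin := a) (tmax := b) ⟨t₀, ht₀⟩ x₀
      (C * (b - a)).toNNReal 0 C.toNNReal K :=
    { lipschitzOnWith := fun t _ => (hlip t).lipschitzOnWith
      continuousOn := fun x _ => (hcont x).continuousOn
      norm_le := fun t _ x _ => by rw [Real.coe_toNNReal _ hC]; exact hbdd t x
      mul_max_le := by
        rw [Real.coe_toNNReal _ hC, NNReal.coe_zero, sub_zero,
          Real.coe_toNNReal _ (mul_nonneg hC (sub_nonneg.2 (ht₀.1.trans ht₀.2)))]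
        exact mul_le_mul_of_nonneg_left
          (max_le (by linarith [ht₀.1]) (by linarith [ht₀.2])) hC }
  exact hpl.exists_eq_forall_mem_Icc_hasDerivWithinAt₀

theorem exists_forall_eqOn_of_eqOn_le {X Y : Type*} {α : ℕ → X → Y} {S : ℕ → Set X}
    (h : ∀ n m, n ≤ m → EqOn (α n) (α m) (S n)) : ∃ r : X → Y, ∀ n, EqOn r (α n) (S n) := by
  classical
  refine ⟨fun x => if hx : ∃ n, x ∈ S n then α (Nat.find hx) x else α 0 x, fun n x hxn => ?_⟩
  have hx : ∃ n, x ∈ S n := ⟨n, hxn⟩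
  simp only [dif_pos hx]
  exact h _ _ (Nat.find_min' hx hxn) (Nat.find_spec hx)

theorem exists_mem_Icc_of_continuousOn_of_pos {α : ℝ → ℝ} {a b : ℝ}
    (hα : ContinuousOn α (Icc a b)) (hpos : ∀ t ∈ Icc a b, 0 < α t) :
    ∃ p > 0, ∃ q, ∀ t ∈ Icc a b, α t ∈ Icc p q := by
  rcases (Icc a b).eq_empty_or_nonempty with h | hne
  · exact ⟨1, one_pos, 0, by simp [h]⟩
  obtain ⟨t₁, ht₁, hmin⟩ := isCompact_Icc.exists_isMinOn hne hα
  obtain ⟨t₂, -, hmax⟩ := isCompact_Icc.exists_isMaxOn hne hα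
  exact ⟨α t₁, hpos t₁ ht₁, α t₂, fun t ht => ⟨hmin ht, hmax ht⟩⟩

def truncField (f : ℝ → ℝ → ℝ) (a b x r : ℝ) : ℝ := f x (max a (min b r))

theorem truncField_of_mem {f : ℝ → ℝ → ℝ} {a b x r : ℝ} (h : r ∈ Icc a b) :
    truncField f a b x r = f x r := by
  rw [truncField, min_eq_right h.2, max_eq_right h.1]

theorem isIntegralCurveOn_truncField_iff {f : ℝ → ℝ → ℝ} {a b : ℝ} {γ : ℝ → ℝ} {s : Set ℝ}
    (h : ∀ t ∈ s, γ t ∈ Icc a b) :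
    IsIntegralCurveOn γ (truncField f a b) s ↔ IsIntegralCurveOn γ f s := by
  refine forall₂_congr fun t ht => ?_
  rw [truncField_of_mem (h t ht)]

def IsVanishingCurve (f : ℝ → ℝ → ℝ) (ρ : ℝ → ℝ) (t T : ℝ) : Prop :=
  t < T ∧ (∀ x ∈ Ico t T, 0 < ρ x) ∧ IsIntegralCurveOn ρ f (Ico t T) ∧ Tendsto ρ (𝓝[<] T) (𝓝 0)

namespace IsVanishingCurve

variable {f : ℝ → ℝ → ℝ} {ρ : ℝ → ℝ} {t T : ℝ}

theorem mem_vanishingValues (hρ : IsVanishingCurve f ρ t T) {u : ℝ} (hu : u ∈ Ico t T) :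
    ρ u ∈ vanishingValues f u :=
  ⟨ρ, T, hu.2, fun x hx => hρ.2.1 x ⟨hu.1.trans hx.1, hx.2⟩,
    hρ.2.2.1.mono (Ico_subset_Ico_left hu.1), hρ.2.2.2, rfl⟩

theorem extend_left (hρ : IsVanishingCurve f ρ t T) {β : ℝ → ℝ} {s : ℝ} (hst : s ≤ t)
    (hβ : IsIntegralCurveOn β f (Icc s t)) (hβpos : ∀ x ∈ Icc s t, 0 < β x) (ht : β t = ρ t) :
    ∃ γ, IsVanishingCurve f γ s T ∧ γ s = β s := by
  obtain ⟨htT, hpos, hρ, hlim⟩ := hρ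
  set γ := fun x => if x ≤ t then β x else ρ x
  have hγβ : EqOn γ β (Icc s t) := fun x hx => if_pos hx.2
  have hγρ : EqOn γ ρ (Ico t T) := fun x hx => by
    rcases hx.1.eq_or_lt with rfl | hlt
    · simp [γ, ht]
    · simp [γ, not_le.2 hlt]
  refine ⟨γ, ⟨hst.trans_lt htT, fun x hx => ?_, ?_, ?_⟩, hγβ ⟨le_rfl, hst⟩⟩
  · rcases le_or_gt x t with hxt | hxt
    · exact hγβ ⟨hx.1, hxt⟩ ▸ hβpos x ⟨hx.1, hxt⟩
    · exact hγρ ⟨hxt.le, hx.2⟩ ▸ hpos x ⟨hxt.le, hx.2⟩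
  · rw [← Icc_union_Ico_eq_Ico hst htT]
    refine (hβ.congr hγβ).union (hρ.congr hγρ) (by rw [closure_Icc]; exact inter_subset_left) ?_
    rw [closure_Ico htT.ne]
    exact fun x hx => ⟨hx.1.1, hx.2.2.trans_lt htT⟩
  · exact hlim.congr' (hγρ.symm.eventuallyEq_of_mem (Ico_mem_nhdsLT htT))

end IsVanishingCurve

theorem isVanishingCurve_iSup {f : ℝ → ℝ → ℝ} {r : ℝ → ℝ} {τ : ℕ → ℝ} {t₀ : ℝ}
    (hτ : StrictMono τ) (hbdd : BddAbove (range τ)) (ht₀ : t₀ ≤ τ 0)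
    (hr : ∀ n, IsIntegralCurveOn r f (Icc t₀ (τ n))) (hpos : ∀ n, ∀ x ∈ Icc t₀ (τ n), 0 < r x)
    (hanti : ∀ n, AntitoneOn r (Icc t₀ (τ n))) (hlim : Tendsto (r ∘ τ) atTop (𝓝 0)) :
    IsVanishingCurve f r t₀ (⨆ n, τ n) := by
  set T := ⨆ n, τ n
  have hτT : ∀ n, τ n < T := fun n => (hτ n.lt_succ_self).trans_le (le_ciSup hbdd _)
  have hcover : ∀ x < T, ∃ n, x < τ n := fun x hx => exists_lt_of_lt_ciSup hx
  have hpos' : ∀ x ∈ Ico t₀ T, 0 < r x := fun x hx => by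
    obtain ⟨n, hn⟩ := hcover x hx.2
    exact hpos n x ⟨hx.1, hn.le⟩
  refine ⟨ht₀.trans_lt (hτT 0), hpos', fun x hx => ?_,
    tendsto_order.2 ⟨fun b hb => ?_, fun b hb => ?_⟩⟩
  · obtain ⟨n, hn⟩ := hcover x hx.2
    exact (hr n x ⟨hx.1, hn.le⟩).mono_of_mem_nhdsWithin
      (mem_nhdsWithin.2 ⟨Iio (τ n), isOpen_Iio, hn, fun y hy => ⟨hy.2.1, hy.1.le⟩⟩)
  · filter_upwards [Ico_mem_nhdsLT (ht₀.trans_lt (hτT 0))] with x hx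
    exact hb.trans (hpos' x hx)
  · obtain ⟨n, hn⟩ := (hlim.eventually (gt_mem_nhds hb)).exists
    filter_upwards [Ico_mem_nhdsLT (hτT n)] with x hx
    obtain ⟨m, hm⟩ := hcover x hx.2
    have hτn : t₀ ≤ τ n := ht₀.trans (hτ.monotone n.zero_le)
    exact (hanti m ⟨hτn, hx.1.trans hm.le⟩ ⟨hτn.trans hx.1, hm.le⟩ hx.1).trans_lt hn

structure HorizonConditions (f : ℝ → ℝ → ℝ) (δ c R₀ : ℝ) : Prop where
  continuous_time : ∀ r, 0 < r → Continuous (f · r)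
  lipschitzOnWith : ∀ a b, 0 < a → ∃ K : ℝ≥0, ∀ x, LipschitzOnWith K (f x) (Icc a b)
  δ_pos : 0 < δ
  c_pos : 0 < c
  le_neg_div_of_lt : ∀ x r, 0 < r → r < δ → f x r ≤ -c / (2 * r)
  δ_lt_R₀ : δ < R₀
  half_le : ∀ x r, R₀ ≤ r → 1 / 2 ≤ f x r

theorem HorizonConditions.of_continuousOn {f : ℝ → ℝ → ℝ} {δ c R₀ : ℝ}
    (hf : ContinuousOn (fun p : ℝ × ℝ => f p.1 p.2) (univ ×ˢ Ioi 0))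
    (hlip : ∀ a b : ℝ, 0 < a → a < b → ∃ L > 0, ∀ x : ℝ,
      ∀ r₁ ∈ Icc a b, ∀ r₂ ∈ Icc a b, |f x r₁ - f x r₂| ≤ L * |r₁ - r₂|)
    (hδ : 0 < δ) (hc : 0 < c) (hsmall : ∀ x r : ℝ, 0 < r → r < δ → f x r ≤ -c / (2 * r))
    (hR₀ : δ < R₀) (hlarge : ∀ x r : ℝ, R₀ ≤ r → (1 : ℝ) / 2 ≤ f x r) :
    HorizonConditions f δ c R₀ where
  continuous_time r hr :=
    hf.comp_continuous (continuous_id.prodMk continuous_const) fun x => ⟨mem_univ x, hr⟩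
  lipschitzOnWith a b ha := by
    obtain ⟨L, hL, hLf⟩ := hlip a (max b (a + 1)) ha (lt_max_of_lt_right (lt_add_one a))
    refine ⟨L.toNNReal, fun x => LipschitzOnWith.of_dist_le_mul fun r₁ h₁ r₂ h₂ => ?_⟩
    rw [Real.dist_eq, Real.dist_eq, Real.coe_toNNReal _ hL.le]
    exact hLf x r₁ ⟨h₁.1, le_max_of_le_left h₁.2⟩ r₂ ⟨h₂.1, le_max_of_le_left h₂.2⟩
  δ_pos := hδ
  c_pos := hc
  le_neg_div_of_lt := hsmall
  δ_lt_R₀ := hR₀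
  half_le := hlarge

namespace HorizonConditions

variable {f : ℝ → ℝ → ℝ} {δ c R₀ : ℝ} (hF : HorizonConditions f δ c R₀)
include hF

theorem neg_of_lt_δ {x r : ℝ} (h0 : 0 < r) (hr : r < δ) : f x r < 0 :=
  (hF.le_neg_div_of_lt x r h0 hr).trans_lt
    (div_neg_of_neg_of_pos (neg_neg_of_pos hF.c_pos) (by positivity))

/-- `f` is Lipschitz on a band containing `δ / 2`, where `f < 0`, and `R₀`, where `f > 0`. -/
theorem exists_abs_le {p q : ℝ} (hp : 0 < p) : ∃ C, ∀ x, ∀ r ∈ Icc p q, |f x r| ≤ C := by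
  have hδ := hF.δ_pos
  have hR₀ := hF.δ_lt_R₀
  set p' := min p (δ / 2)
  set q' := max q R₀
  obtain ⟨K, hK⟩ := hF.lipschitzOnWith p' q' (lt_min hp (by linarith))
  have hR₀' : R₀ ∈ Icc p' q' := ⟨(min_le_right _ _).trans (by linarith), le_max_right _ _⟩
  have hδ' : δ / 2 ∈ Icc p' q' := ⟨min_le_right _ _, by linarith [le_max_right q R₀]⟩
  refine ⟨K * (q' - p'), fun x r hr => ?_⟩
  have hr' : r ∈ Icc p' q' := ⟨(min_le_left _ _).trans hr.1, hr.2.trans (le_max_left _ _)⟩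
  have h₁ := (hK x).dist_le_mul r hr' R₀ hR₀'
  have h₂ := (hK x).dist_le_mul r hr' (δ / 2) hδ'
  have hw₁ := mul_le_mul_of_nonneg_left
    (abs_sub_le_of_le_of_le hr'.1 hr'.2 hR₀'.1 hR₀'.2) K.coe_nonneg
  have hw₂ := mul_le_mul_of_nonneg_left
    (abs_sub_le_of_le_of_le hr'.1 hr'.2 hδ'.1 hδ'.2) K.coe_nonneg
  have h₃ := hF.half_le x R₀ le_rfl
  have h₄ := hF.neg_of_lt_δ (x := x) (half_pos hδ) (half_lt_self hδ)
  rw [Real.dist_eq, Real.dist_eq, abs_le] at h₁ h₂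
  rw [abs_le]
  constructor <;> linarith [h₁.1, h₂.2]

theorem lipschitzWith_truncField {a b : ℝ} (ha : 0 < a) (hab : a ≤ b) :
    ∃ K : ℝ≥0, ∀ x, LipschitzWith K (truncField f a b x) := by
  obtain ⟨K, hK⟩ := hF.lipschitzOnWith a b ha
  refine ⟨K, fun x => LipschitzWith.of_dist_le_mul fun r r' => ?_⟩
  calc dist (truncField f a b x r) (truncField f a b x r')
      ≤ K * dist (projIcc a b hab r : ℝ) (projIcc a b hab r') :=
        (hK x).dist_le_mul _ (projIcc a b hab r).2 _ (projIcc a b hab r').2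
    _ ≤ K * dist r r' :=
        mul_le_mul_of_nonneg_left (abs_projIcc_sub_projIcc hab) K.coe_nonneg

theorem exists_isIntegralCurveOn_truncField {a b : ℝ} (ha : 0 < a) (hab : a ≤ b) {s u t₀ : ℝ}
    (ht₀ : t₀ ∈ Icc s u) (y : ℝ) :
    ∃ γ : ℝ → ℝ, γ t₀ = y ∧ IsIntegralCurveOn γ (truncField f a b) (Icc s u) := by
  obtain ⟨K, hK⟩ := hF.lipschitzWith_truncField ha hab
  obtain ⟨C, hC⟩ := hF.exists_abs_le (q := b) ha
  exact exists_isIntegralCurveOn_Icc hK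
    (fun r => hF.continuous_time _ (ha.trans_le (le_max_left _ _)))
    (fun x r => hC x _ (projIcc a b hab r).2) ht₀ y

theorem le_of_le_of_pos {α β : ℝ → ℝ} {a b : ℝ} (hα : IsIntegralCurveOn α f (Icc a b))
    (hβ : IsIntegralCurveOn β f (Icc a b)) (hαpos : ∀ t ∈ Icc a b, 0 < α t)
    (hβpos : ∀ t ∈ Icc a b, 0 < β t) (ha : α a ≤ β a) : ∀ t ∈ Icc a b, α t ≤ β t := by
  obtain ⟨p₁, hp₁, q₁, hα₁⟩ := exists_mem_Icc_of_continuousOn_of_pos hα.continuousOn hαpos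
  obtain ⟨p₂, hp₂, q₂, hβ₂⟩ := exists_mem_Icc_of_continuousOn_of_pos hβ.continuousOn hβpos
  obtain ⟨K, hK⟩ := hF.lipschitzOnWith (min p₁ p₂) (max q₁ q₂) (lt_min hp₁ hp₂)
  exact IsIntegralCurveOn.le_of_le hK hα hβ
    (fun t ht => ⟨min_le_of_left_le (hα₁ t ht).1, le_max_of_le_left (hα₁ t ht).2⟩)
    (fun t ht => ⟨min_le_of_right_le (hβ₂ t ht).1, le_max_of_le_right (hβ₂ t ht).2⟩) ha

theorem lt_and_le_of_isVanishingCurve {ρ β : ℝ → ℝ} {s u T : ℝ}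
    (hρ : IsVanishingCurve f ρ s T) (hsu : s ≤ u) (hβ : IsIntegralCurveOn β f (Icc s u))
    (hβpos : ∀ x ∈ Icc s u, 0 < β x) (hle : β s ≤ ρ s) : u < T ∧ β u ≤ ρ u := by
  obtain ⟨hsT, hpos, hρ, hlim⟩ := hρ
  have hcmp : ∀ x ∈ Icc s u, x < T → β x ≤ ρ x := fun x hx hxT =>
    hF.le_of_le_of_pos (hβ.mono (Icc_subset_Icc_right hx.2)) (hρ.mono (Icc_subset_Ico_right hxT))
      (fun y hy => hβpos y ⟨hy.1, hy.2.trans hx.2⟩) (fun y hy => hpos y ⟨hy.1, hy.2.trans_lt hxT⟩)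
      hle x ⟨hx.1, le_rfl⟩
  have huT : u < T := by
    by_contra! hTu
    -- `ρ ≥ β` would stay bounded away from `0` on `[s, T)`
    obtain ⟨p, hp, _, hβp⟩ := exists_mem_Icc_of_continuousOn_of_pos hβ.continuousOn hβpos
    obtain ⟨x, hxp, hx⟩ := ((hlim.eventually (gt_mem_nhds hp)).and (Ico_mem_nhdsLT hsT)).exists
    have hxu : x ∈ Icc s u := ⟨hx.1, hx.2.le.trans hTu⟩
    exact (hxp.trans_le ((hβp x hxu).1.trans (hcmp x hxu hx.2))).false
  exact ⟨huT, hcmp u ⟨hsu, le_rfl⟩ huT⟩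

theorem le_of_isVanishingCurve {ρ : ℝ → ℝ} {t T : ℝ} (hρ : IsVanishingCurve f ρ t T) :
    ∀ x ∈ Ico t T, ρ x ≤ R₀ := by
  obtain ⟨-, -, hρ, hlim⟩ := hρ
  intro x hx
  obtain ⟨x₁, hx₁R, hx₁⟩ := ((hlim.eventually (gt_mem_nhds (hF.δ_pos.trans hF.δ_lt_R₀))).and
    (Ioo_mem_nhdsLT hx.2)).exists
  exact (hρ.mono fun y hy => ⟨hx.1.trans hy.1, hy.2.trans_lt hx₁.2⟩).le_const_of_right
    (fun y r hr => one_half_pos.trans_le (hF.half_le y r hr.le)) hx₁R.le x ⟨le_rfl, hx₁.1.le⟩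

theorem truncField_le {a y : ℝ} (ha : 0 < a) (hay : a ≤ y) (hy : y < δ) (x r : ℝ) :
    truncField f a y x r ≤ -(c / (2 * y)) := by
  have hr : max a (min y r) ∈ Icc a y := (projIcc a y hay r).2
  calc truncField f a y x r ≤ -c / (2 * max a (min y r)) :=
        hF.le_neg_div_of_lt x _ (ha.trans_le hr.1) (hr.2.trans_lt hy)
    _ ≤ -(c / (2 * y)) := by
        rw [neg_div, neg_le_neg_iff]
        exact div_le_div_of_nonneg_left hF.c_pos.le (by linarith [hr.1]) (by linarith [hr.2])

/-- The truncated solution decreases at speed at least `c / (2 y₀)`, so it reaches the level `a`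
before time `t₀ + 2 y₀² / c`. -/
theorem exists_truncField_descent (t₀ : ℝ) {a y₀ : ℝ} (ha : 0 < a) (hay : a < y₀) (hy₀ : y₀ < δ) :
    ∃ α : ℝ → ℝ, ∃ τ ∈ Icc t₀ (t₀ + 2 * y₀ ^ 2 / c), α t₀ = y₀ ∧ α τ = a ∧
      IsIntegralCurveOn α (truncField f a y₀) (Icc t₀ (t₀ + 2 * y₀ ^ 2 / c)) ∧
      AntitoneOn α (Icc t₀ (t₀ + 2 * y₀ ^ 2 / c)) := by
  have hc := hF.c_pos
  have hy₀0 := ha.trans hay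
  have ht₁ : t₀ ≤ t₀ + 2 * y₀ ^ 2 / c := le_add_of_nonneg_right (by positivity)
  obtain ⟨α, hα₀, hα⟩ := hF.exists_isIntegralCurveOn_truncField ha hay.le ⟨le_rfl, ht₁⟩ y₀
  have hv : ∀ t ∈ Ico t₀ (t₀ + 2 * y₀ ^ 2 / c), truncField f a y₀ t (α t) ≤ -(c / (2 * y₀)) :=
    fun t _ => hF.truncField_le ha hay.le hy₀ t (α t)
  have hend : α (t₀ + 2 * y₀ ^ 2 / c) ≤ a := by
    have := hα.le_sub_mul hv _ ⟨ht₁, le_rfl⟩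
    rw [hα₀, add_sub_cancel_left, show c / (2 * y₀) * (2 * y₀ ^ 2 / c) = y₀ by
      field_simp] at this
    linarith
  obtain ⟨τ, hτ, hατ⟩ := intermediate_value_Icc' ht₁ hα.continuousOn ⟨hend, hα₀ ▸ hay.le⟩
  refine ⟨α, τ, hτ, hα₀, hατ, hα, hα.antitoneOn fun t ht => (hv t ht).trans ?_⟩
  exact neg_nonpos.2 (by positivity)

/-- The vanishing curve is the common extension of the solutions of the fields truncated at levels
`a n ↓ 0`: each of them agrees with the previous one until that one reaches its level. -/
theorem exists_isVanishingCurve (t₀ : ℝ) {y₀ : ℝ} (h0 : 0 < y₀) (hy₀ : y₀ < δ) :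
    ∃ ρ T, IsVanishingCurve f ρ t₀ T ∧ ρ t₀ = y₀ := by
  obtain ⟨a, ha_anti, ha, ha_lim⟩ := exists_seq_strictAnti_tendsto' h0
  choose α τ hτ hα₀ hατ hα hanti using
    fun n => hF.exists_truncField_descent t₀ (ha n).1 (ha n).2 hy₀
  have hband : ∀ n, ∀ x ∈ Icc t₀ (τ n), α n x ∈ Icc (a n) y₀ := fun n x hx =>
    ⟨hατ n ▸ hanti n ⟨hx.1, hx.2.trans (hτ n).2⟩ (hτ n) hx.2,
      hα₀ n ▸ hanti n ⟨le_rfl, (hτ n).1.trans (hτ n).2⟩ ⟨hx.1, hx.2.trans (hτ n).2⟩ hx.1⟩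
  have hαf : ∀ n, IsIntegralCurveOn (α n) f (Icc t₀ (τ n)) := fun n =>
    (isIntegralCurveOn_truncField_iff (hband n)).1 ((hα n).mono (Icc_subset_Icc_right (hτ n).2))
  have hagree : ∀ n m, n ≤ m → EqOn (α n) (α m) (Icc t₀ (τ n)) := fun n m hnm => by
    obtain ⟨K, hK⟩ := hF.lipschitzWith_truncField (ha m).1 (ha m).2.le
    have hband' : ∀ x ∈ Icc t₀ (τ n), α n x ∈ Icc (a m) y₀ := fun x hx =>
      ⟨(ha_anti.antitone hnm).trans (hband n x hx).1, (hband n x hx).2⟩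
    exact ((isIntegralCurveOn_truncField_iff hband').2 (hαf n)).eqOn_Icc hK
      ((hα m).mono (Icc_subset_Icc_right (hτ n).2)) ((hα₀ n).trans (hα₀ m).symm)
  have hτ_mono : StrictMono τ := strictMono_nat_of_lt_succ fun n => by
    by_contra! h
    have := hanti (n + 1) (hτ (n + 1)) (hτ n) h
    rw [← hagree n (n + 1) n.le_succ ⟨(hτ n).1, le_rfl⟩, hατ, hατ] at this
    exact (ha_anti n.lt_succ_self).not_ge this
  obtain ⟨r, hr⟩ := exists_forall_eqOn_of_eqOn_le hagree
  refine ⟨r, _, isVanishingCurve_iSup hτ_mono ⟨_, forall_mem_range.2 fun n => (hτ n).2⟩ (hτ 0).1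
    (fun n => (hαf n).congr (hr n)) (fun n x hx => hr n hx ▸ (ha n).1.trans_le (hband n x hx).1)
    (fun n => ((hanti n).mono (Icc_subset_Icc_right (hτ n).2)).congr (hr n).symm)
    (ha_lim.congr fun n => ((hr n ⟨(hτ n).1, le_rfl⟩).trans (hατ n)).symm),
    (hr 0 ⟨le_rfl, (hτ 0).1⟩).trans (hα₀ 0)⟩

theorem vanishingValues_le {t y : ℝ} (hy : y ∈ vanishingValues f t) : y ≤ R₀ := by
  obtain ⟨ρ, T, hT, hpos, hρ, hlim, rfl⟩ := hy
  exact hF.le_of_isVanishingCurve ⟨hT, hpos, hρ, hlim⟩ t ⟨le_rfl, hT⟩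

theorem mem_vanishingValues {t y : ℝ} (h0 : 0 < y) (hy : y < δ) : y ∈ vanishingValues f t := by
  obtain ⟨ρ, T, hρ, rfl⟩ := hF.exists_isVanishingCurve t h0 hy
  exact hρ.mem_vanishingValues ⟨le_rfl, hρ.1⟩

theorem bddAbove_vanishingValues (t : ℝ) : BddAbove (vanishingValues f t) :=
  ⟨R₀, fun _ hy => hF.vanishingValues_le hy⟩

theorem nonempty_vanishingValues (t : ℝ) : (vanishingValues f t).Nonempty :=
  ⟨δ / 2, hF.mem_vanishingValues (half_pos hF.δ_pos) (half_lt_self hF.δ_pos)⟩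

theorem le_sSup_vanishingValues (t : ℝ) : δ ≤ sSup (vanishingValues f t) :=
  calc δ = sSup (Ioo 0 δ) := (csSup_Ioo hF.δ_pos).symm
    _ ≤ sSup (vanishingValues f t) :=
      csSup_le_csSup (hF.bddAbove_vanishingValues t) (nonempty_Ioo.2 hF.δ_pos)
        fun _ hy => hF.mem_vanishingValues hy.1 hy.2

theorem sSup_vanishingValues_le (t : ℝ) : sSup (vanishingValues f t) ≤ R₀ :=
  csSup_le (hF.nonempty_vanishingValues t) fun _ hy => hF.vanishingValues_le hy

theorem sSup_vanishingValues_le_of_pos {t : ℝ} {r : ℝ → ℝ} (hr : IsIntegralCurveOn r f (Ici t))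
    (hpos : ∀ x ∈ Ici t, 0 < r x) : sSup (vanishingValues f t) ≤ r t := by
  refine csSup_le (hF.nonempty_vanishingValues t) fun y hy => ?_
  obtain ⟨ρ, T, hT, hρpos, hρ, hlim, rfl⟩ := hy
  by_contra! hlt
  exact (hF.lt_and_le_of_isVanishingCurve ⟨hT, hρpos, hρ, hlim⟩ hT.le
    (hr.mono Icc_subset_Ici_self) (fun x hx => hpos x hx.1) hlt.le).1.false

theorem exists_isIntegralCurveOn_truncField_mem_Icc {s u y : ℝ} (hsu : s ≤ u)
    (hy : y ∈ Icc (δ / 2) (R₀ + 1)) :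
    ∃ β : ℝ → ℝ, β u = y ∧ IsIntegralCurveOn β (truncField f (δ / 2) (R₀ + 1)) (Icc s u) ∧
      ∀ x ∈ Icc s u, β x ∈ Icc (δ / 2) (R₀ + 1) := by
  have hδ := hF.δ_pos
  have hR₀ := hF.δ_lt_R₀
  obtain ⟨β, hβu, hβ⟩ := hF.exists_isIntegralCurveOn_truncField (b := R₀ + 1) (half_pos hδ)
    (by linarith) ⟨hsu, le_rfl⟩ y
  refine ⟨β, hβu, hβ, fun x hx => ⟨hβ.const_le_of_right (fun t r hr => ?_) (hβu ▸ hy.1) x hx,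
    hβ.le_const_of_right (fun t r hr => ?_) (hβu ▸ hy.2) x hx⟩⟩
  · rw [truncField, max_eq_left (min_le_of_right_le hr.le)]
    exact hF.neg_of_lt_δ (half_pos hδ) (half_lt_self hδ)
  · rw [truncField, min_eq_left hr.le, max_eq_right (by linarith)]
    linarith [hF.half_le t (R₀ + 1) (by linarith)]

theorem le_sSup_of_isIntegralCurveOn {ψ : ℝ → ℝ} {s u : ℝ} (hsu : s ≤ u)
    (hψ : IsIntegralCurveOn ψ (truncField f (δ / 2) (R₀ + 1)) (Icc s u))
    (hψs : ψ s = sSup (vanishingValues f s)) : ψ u ≤ sSup (vanishingValues f u) := by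
  by_contra! hlt
  have hRu := hF.sSup_vanishingValues_le u
  obtain ⟨y, hRy, hyψ, hyR₀⟩ : ∃ y, sSup (vanishingValues f u) < y ∧ y < ψ u ∧ y ≤ R₀ + 1 :=
    ⟨min ((sSup (vanishingValues f u) + ψ u) / 2) (R₀ + 1), lt_min (by linarith) (by linarith),
      (min_le_left _ _).trans_lt (by linarith), min_le_right _ _⟩
  have hδy : δ / 2 ≤ y := by linarith [hF.le_sSup_vanishingValues u, hF.δ_pos]
  obtain ⟨β, hβu, hβ, hβband⟩ := hF.exists_isIntegralCurveOn_truncField_mem_Icc hsu ⟨hδy, hyR₀⟩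
  obtain ⟨K, hK⟩ := hF.lipschitzWith_truncField (b := R₀ + 1) (half_pos hF.δ_pos)
    (by linarith [hF.δ_pos])
  have hβs : β s < sSup (vanishingValues f s) := by
    rw [← hψs]
    by_contra! hle
    have := hψ.le_of_le (fun t => (hK t).lipschitzOnWith) hβ (fun _ _ => mem_univ _)
      (fun _ _ => mem_univ _) hle u ⟨hsu, le_rfl⟩
    linarith
  obtain ⟨_, ⟨ρ, T, hT, hρpos, hρ, hlim, rfl⟩, hβρ⟩ :=
    exists_lt_of_lt_csSup (hF.nonempty_vanishingValues s) hβs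
  have hρ' : IsVanishingCurve f ρ s T := ⟨hT, hρpos, hρ, hlim⟩
  obtain ⟨huT, hle⟩ := hF.lt_and_le_of_isVanishingCurve hρ' hsu
    ((isIntegralCurveOn_truncField_iff hβband).1 hβ)
    (fun x hx => (half_pos hF.δ_pos).trans_le (hβband x hx).1) hβρ.le
  have := le_csSup (hF.bddAbove_vanishingValues u) (hρ'.mem_vanishingValues ⟨hsu, huT⟩)
  linarith

theorem sSup_le_of_isIntegralCurveOn {ψ : ℝ → ℝ} {s u : ℝ} (hsu : s ≤ u)
    (hψ : IsIntegralCurveOn ψ (truncField f (δ / 2) (R₀ + 1)) (Icc s u))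
    (hψs : ψ s = sSup (vanishingValues f s)) : sSup (vanishingValues f u) ≤ ψ u := by
  obtain ⟨K, hK⟩ := hF.lipschitzWith_truncField (b := R₀ + 1) (half_pos hF.δ_pos)
    (by linarith [hF.δ_pos, hF.δ_lt_R₀])
  have key : ∀ y ∈ vanishingValues f u, δ / 2 ≤ y → y ≤ ψ u := by
    intro y hy hδy
    have hyR₀ := hF.vanishingValues_le hy
    obtain ⟨ρ, T, hT, hρpos, hρ, hlim, rfl⟩ := hy
    obtain ⟨β, hβu, hβ, hβband⟩ :=
      hF.exists_isIntegralCurveOn_truncField_mem_Icc hsu ⟨hδy, by linarith⟩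
    obtain ⟨γ, hγ, hγs⟩ := IsVanishingCurve.extend_left ⟨hT, hρpos, hρ, hlim⟩ hsu
      ((isIntegralCurveOn_truncField_iff hβband).1 hβ)
      (fun x hx => (half_pos hF.δ_pos).trans_le (hβband x hx).1) hβu
    have hβs : β s ≤ ψ s := hψs ▸ hγs ▸
      le_csSup (hF.bddAbove_vanishingValues s) (hγ.mem_vanishingValues ⟨le_rfl, hγ.1⟩)
    exact hβu ▸ hβ.le_of_le (fun t => (hK t).lipschitzOnWith) hψ (fun _ _ => mem_univ _)
      (fun _ _ => mem_univ _) hβs u ⟨hsu, le_rfl⟩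
  have hδψ : δ / 2 ≤ ψ u :=
    key _ (hF.mem_vanishingValues (half_pos hF.δ_pos) (half_lt_self hF.δ_pos)) le_rfl
  exact csSup_le (hF.nonempty_vanishingValues u) fun y hy =>
    (le_total (δ / 2) y).elim (key y hy) fun h => h.trans hδψ

theorem hasDerivAt_sSup_vanishingValues (t : ℝ) :
    HasDerivAt (fun t => sSup (vanishingValues f t)) (f t (sSup (vanishingValues f t))) t := by
  obtain ⟨ψ, hψ₀, hψ⟩ := hF.exists_isIntegralCurveOn_truncField (b := R₀ + 1)
    (half_pos hF.δ_pos) (by linarith [hF.δ_pos, hF.δ_lt_R₀]) (s := t - 1) (u := t + 1)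
    ⟨le_rfl, by linarith⟩ (sSup (vanishingValues f (t - 1)))
  have heq : EqOn ψ (fun t => sSup (vanishingValues f t)) (Icc (t - 1) (t + 1)) := fun u hu =>
    have hψu := hψ.mono (Icc_subset_Icc_right hu.2)
    le_antisymm (hF.le_sSup_of_isIntegralCurveOn hu.1 hψu hψ₀)
      (hF.sSup_le_of_isIntegralCurveOn hu.1 hψu hψ₀)
  have hmem : Icc (t - 1) (t + 1) ∈ 𝓝 t := Icc_mem_nhds (by linarith) (by linarith)
  have ht := mem_of_mem_nhds hmem
  have := ((hψ t ht).hasDerivAt hmem).congr_of_eventuallyEq (heq.symm.eventuallyEq_of_mem hmem)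
  rwa [heq ht, truncField_of_mem ⟨by linarith [hF.le_sSup_vanishingValues t, hF.δ_pos],
    by linarith [hF.sSup_vanishingValues_le t]⟩] at this

end HorizonConditions

theorem inner_black_hole_horizon_exists_general (f : ℝ → ℝ → ℝ)
    (hf : ContinuousOn (fun p : ℝ × ℝ => f p.1 p.2) (Set.univ ×ˢ Set.Ioi 0))
    (hlip : ∀ a b : ℝ, 0 < a → a < b → ∃ L > 0, ∀ x : ℝ,
      ∀ r₁ ∈ Set.Icc a b, ∀ r₂ ∈ Set.Icc a b, |f x r₁ - f x r₂| ≤ L * |r₁ - r₂|)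
    (δ c R₀ : ℝ) (hδ : 0 < δ) (hc : 0 < c)
    (hsmall : ∀ x r : ℝ, 0 < r → r < δ → f x r ≤ -c / (2 * r))
    (hR₀ : δ < R₀) (hlarge : ∀ x r : ℝ, R₀ ≤ r → (1 : ℝ) / 2 ≤ f x r) :
    ∃ m M : ℝ, 0 < m ∧ m ≤ M ∧
      ∃ R : ℝ → ℝ,
        (∀ x, m ≤ R x ∧ R x ≤ M) ∧
        (∀ x, HasDerivAt R (f x (R x)) x) ∧
        (∀ t : ℝ, R t = sSup (vanishingValues f t)) ∧
        (∀ t : ℝ, ∀ r ∈ escapingSolutions f t, R t ≤ r t) := by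
  have hF := HorizonConditions.of_continuousOn hf hlip hδ hc hsmall hR₀ hlarge
  exact ⟨δ, R₀, hδ, hR₀.le, fun t => sSup (vanishingValues f t),
    fun t => ⟨hF.le_sSup_vanishingValues t, hF.sSup_vanishingValues_le t⟩,
    hF.hasDerivAt_sSup_vanishingValues, fun _ => rfl,
    fun _ _ hr => hF.sSup_vanishingValues_le_of_pos hr.2.1 hr.1⟩

/-- Second part of Theorem 4.2: there is a global positive bounded solution `R₊`
which at each time is the supremum of the values of all solutions ending at
`r = 0` in finite time, and which lies below every escaping solution. -/
theorem inner_black_hole_horizon_exists (f : ℝ → ℝ → ℝ)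
    (hf : ContinuousOn (fun p : ℝ × ℝ => f p.1 p.2) (Set.univ ×ˢ Set.Ioi 0))
    (hlip : ∀ a b : ℝ, 0 < a → a < b → ∃ L > 0, ∀ x : ℝ,
      ∀ r₁ ∈ Set.Icc a b, ∀ r₂ ∈ Set.Icc a b, |f x r₁ - f x r₂| ≤ L * |r₁ - r₂|)
    (δ c R₀ K : ℝ) (hδ : 0 < δ) (hc : 0 < c)
    (hsmall : ∀ x r : ℝ, 0 < r → r < δ → f x r ≤ -c / (2 * r))
    (hR₀ : δ < R₀) (hlarge : ∀ x r : ℝ, R₀ ≤ r → (1 : ℝ) / 2 ≤ f x r)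
    (hK : 0 < K) (hbdd : ∀ x r : ℝ, δ ≤ r → |f x r| ≤ K) :
    ∃ m M : ℝ, 0 < m ∧ m ≤ M ∧
      ∃ R : ℝ → ℝ,
        (∀ x, m ≤ R x ∧ R x ≤ M) ∧
        (∀ x, HasDerivAt R (f x (R x)) x) ∧
        (∀ t : ℝ, R t = sSup (vanishingValues f t)) ∧
        (∀ t : ℝ, ∀ r ∈ escapingSolutions f t, R t ≤ r t) :=
  inner_black_hole_horizon_exists_general f hf hlip δ c R₀ hδ hc hsmall hR₀ hlarge
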